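/- Let $p \in [1,2]$, $A = [a_1, \dots, a_n]^\top \in \mathbb{R}^{n \times d}$ have full column rank, $\gamma \in [0,1]$, and $j \in [n]$. Let $B \in \mathbb{R}^{(n+1) \times d}$ be obtained from $A$ by replacing row $a_j$ with $(1-\gamma)^{1/p} a_j$ and appending a new row $\gamma^{1/p} a_j$. Then the $\ell_p$ Lewis weights satisfy $w_i(B) = w_i(A)$ for $i \ne j, n+1$, $w_j(B) = (1-\gamma) w_j(A)$, and $w_{n+1}(B) = \gamma w_j(A)$. -/

import Mathlib

/-!
Splitting the row `aⱼ` into `(1 - γ)^{1/p} aⱼ` and `γ^{1/p} aⱼ` while splitting its weight into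
`(1 - γ) wⱼ` and `γ wⱼ` leaves the weighted Gram matrix `Aᵀ W^{1-2/p} A` unchanged, so the split
weights solve the fixed-point equation for `B`. They are therefore the Lewis weights of `B`, since
for `p ≤ 2` the solution is unique: if `c = maxᵢ vᵢ / wᵢ` for two solutions `v, w`, then `v ≤ c w`
gives `Aᵀ V^{1-2/p} A ⪰ c^{1-2/p} Aᵀ W^{1-2/p} A` (as `1 - 2/p ≤ 0`), hence `v ≤ c^{1-p/2} w`,
which at the maximizing index forces `c ≤ 1`.
-/

open Matrix

/-- The `ℓ_p` Lewis weights of `A`, as a predicate: positive weights satisfying the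
fixed-point equation `wᵢ = (aᵢᵀ (Aᵀ W^{1-2/p} A)⁻¹ aᵢ)^{p/2}`. -/
def IsLewisWeights (p : ℝ) {n d : ℕ} (A : Matrix (Fin n) (Fin d) ℝ)
    (w : Fin n → ℝ) : Prop :=
  (∀ i, 0 < w i) ∧
  ∀ i, w i =
    (A i ⬝ᵥ ((Aᵀ * Matrix.diagonal (fun t => w t ^ (1 - 2 / p)) * A)⁻¹).mulVec (A i))
      ^ (p / 2)

namespace Matrix

section Gram

variable {m n : Type*} [Fintype m] [DecidableEq m]

lemma transpose_mul_diagonal_mul_apply (A : Matrix m n ℝ) (g : m → ℝ) (k l : n) :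
    (Aᵀ * diagonal g * A) k l = ∑ i, g i * (A i k * A i l) := by
  rw [mul_apply]
  simp only [mul_diagonal, transpose_apply]
  exact Finset.sum_congr rfl fun i _ => by ring

lemma dotProduct_transpose_mul_diagonal_mul_mulVec [Fintype n] (A : Matrix m n ℝ) (g : m → ℝ)
    (y : n → ℝ) :
    y ⬝ᵥ (Aᵀ * diagonal g * A) *ᵥ y = ∑ i, g i * (A i ⬝ᵥ y) ^ 2 := by
  rw [← mulVec_mulVec, ← mulVec_mulVec, dotProduct_mulVec, vecMul_transpose]
  simp only [dotProduct, mulVec_diagonal]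
  exact Finset.sum_congr rfl fun i _ => by simp only [mulVec, dotProduct]; ring

lemma posDef_transpose_mul_diagonal_mul [Fintype n] {A : Matrix m n ℝ}
    (hA : Function.Injective A.mulVec) {g : m → ℝ} (hg : ∀ i, 0 < g i) :
    (Aᵀ * diagonal g * A).PosDef := by
  simpa only [conjTranspose_eq_transpose_of_trivial] using
    (posDef_diagonal_iff.mpr hg).conjTranspose_mul_mul_same hA

end Gram

lemma mulVec_injective_of_rank_eq_card {K m n : Type*} [Field K] [Fintype n]
    {A : Matrix m n K} (hA : A.rank = Fintype.card n) : Function.Injective A.mulVec := by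
  have h := LinearMap.finrank_range_add_finrank_ker A.mulVecLin
  rw [Module.finrank_fintype_fun_eq_card, ← rank, hA, add_eq_left,
    Submodule.finrank_eq_zero, LinearMap.ker_eq_bot] at h
  exact h

lemma mulVec_injective_of_forall_eq_smul {K l m n : Type*} [Field K] [Fintype n]
    {A : Matrix l n K} {B : Matrix m n K} (hAB : ∀ i, ∃ k, ∃ c : K, A i = c • B k)
    (hA : Function.Injective A.mulVec) : Function.Injective B.mulVec := by
  intro x y hxy
  refine hA (funext fun i => ?_)
  obtain ⟨k, c, hk⟩ := hAB i
  have := congrFun hxy k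
  simp only [mulVec, hk, smul_dotProduct] at this ⊢
  rw [this]

section Inverse

variable {n : Type*} [Fintype n] [DecidableEq n]

lemma PosDef.two_mul_dotProduct_sub_le {N : Matrix n n ℝ} (hN : N.PosDef) (u x : n → ℝ) :
    2 * (u ⬝ᵥ x) - u ⬝ᵥ N *ᵥ u ≤ x ⬝ᵥ N⁻¹ *ᵥ x := by
  set z := N⁻¹ *ᵥ x
  have hNz : N *ᵥ z = x := by
    rw [mulVec_mulVec, mul_nonsing_inv N hN.det_pos.ne'.isUnit, one_mulVec]
  have hNT : Nᵀ = N := by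
    rw [← conjTranspose_eq_transpose_of_trivial]; exact hN.isHermitian
  have hzu : z ⬝ᵥ N *ᵥ u = x ⬝ᵥ u := by
    rw [dotProduct_mulVec, ← mulVec_transpose, hNT, hNz]
  have hnonneg : 0 ≤ (u - z) ⬝ᵥ N *ᵥ (u - z) := by
    simpa only [star_trivial] using hN.posSemidef.dotProduct_mulVec_nonneg (u - z)
  rw [mulVec_sub, sub_dotProduct, dotProduct_sub, dotProduct_sub, hzu, hNz] at hnonneg
  rw [dotProduct_comm x z, dotProduct_comm x u] at *
  linarith

lemma mul_dotProduct_inv_mulVec_le {M N : Matrix n n ℝ} (hM : IsUnit M.det) (hN : N.PosDef)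
    {s : ℝ} (hs : 0 ≤ s) (hMN : ∀ y, s * (y ⬝ᵥ N *ᵥ y) ≤ y ⬝ᵥ M *ᵥ y) (x : n → ℝ) :
    s * (x ⬝ᵥ M⁻¹ *ᵥ x) ≤ x ⬝ᵥ N⁻¹ *ᵥ x := by
  set u := M⁻¹ *ᵥ x
  have hMu : M *ᵥ u = x := by rw [mulVec_mulVec, mul_nonsing_inv M hM, one_mulVec]
  have hvar := hN.two_mul_dotProduct_sub_le (s • u) x
  have hcomp := mul_le_mul_of_nonneg_left (hMN u) hs
  simp only [smul_dotProduct, mulVec_smul, dotProduct_smul, smul_eq_mul] at hvar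
  rw [hMu, dotProduct_comm u x] at hcomp
  rw [dotProduct_comm u x] at hvar
  linarith

end Inverse

end Matrix

namespace IsLewisWeights

variable {p : ℝ} {m d : ℕ} {A : Matrix (Fin m) (Fin d) ℝ} {w v : Fin m → ℝ}

lemma row_ne_zero (hp : 0 < p) (hw : IsLewisWeights p A w) (i : Fin m) : A i ≠ 0 := by
  intro hi
  have := hw.2 i
  rw [hi, zero_dotProduct, Real.zero_rpow (by positivity)] at this
  exact (hw.1 i).ne' this

lemma dotProduct_inv_mulVec_nonneg (hA : Function.Injective A.mulVec)
    (hw : IsLewisWeights p A w) (x : Fin d → ℝ) :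
    0 ≤ x ⬝ᵥ (Aᵀ * diagonal (fun t => w t ^ (1 - 2 / p)) * A)⁻¹ *ᵥ x := by
  have hpd := posDef_transpose_mul_diagonal_mul hA (g := fun t => w t ^ (1 - 2 / p))
    fun t => Real.rpow_pos_of_pos (hw.1 t) _
  simpa only [star_trivial] using hpd.inv.posSemidef.dotProduct_mulVec_nonneg x

lemma le_rpow_mul_of_le_mul (hp : 0 < p) (hp2 : p ≤ 2) (hA : Function.Injective A.mulVec)
    (hw : IsLewisWeights p A w) (hv : IsLewisWeights p A v) {c : ℝ} (hc : 0 < c)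
    (hvw : ∀ i, v i ≤ c * w i) (i : Fin m) : v i ≤ c ^ (1 - p / 2) * w i := by
  set e := 1 - 2 / p
  have he : e ≤ 0 := by
    have : 1 ≤ 2 / p := (le_div_iff₀ hp).mpr (by linarith)
    linarith
  have hgram : ∀ y, c ^ e * (y ⬝ᵥ (Aᵀ * diagonal (fun t => w t ^ e) * A) *ᵥ y) ≤
      y ⬝ᵥ (Aᵀ * diagonal (fun t => v t ^ e) * A) *ᵥ y := by
    intro y
    simp only [dotProduct_transpose_mul_diagonal_mul_mulVec, Finset.mul_sum, ← mul_assoc]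
    refine Finset.sum_le_sum fun t _ => mul_le_mul_of_nonneg_right ?_ (sq_nonneg _)
    rw [← Real.mul_rpow hc.le (hw.1 t).le]
    exact Real.rpow_le_rpow_of_nonpos (hv.1 t) (hvw t) he
  have hpdv := posDef_transpose_mul_diagonal_mul hA fun t => Real.rpow_pos_of_pos (hv.1 t) e
  have hpdw := posDef_transpose_mul_diagonal_mul hA fun t => Real.rpow_pos_of_pos (hw.1 t) e
  have hquad := mul_dotProduct_inv_mulVec_le hpdv.det_pos.ne'.isUnit hpdw
    (Real.rpow_nonneg hc.le e) hgram (A i)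
  have hce : 0 < c ^ e := Real.rpow_pos_of_pos hc e
  calc v i ≤ ((c ^ e)⁻¹ * (A i ⬝ᵥ (Aᵀ * diagonal (fun t => w t ^ e) * A)⁻¹ *ᵥ A i)) ^ (p / 2) := by
        rw [hv.2 i]
        refine Real.rpow_le_rpow (dotProduct_inv_mulVec_nonneg hA hv _) ?_ (by positivity)
        rwa [le_inv_mul_iff₀ hce]
    _ = c ^ (1 - p / 2) * w i := by
        rw [Real.mul_rpow (by positivity) (dotProduct_inv_mulVec_nonneg hA hw _), ← hw.2 i,
          ← Real.rpow_neg hc.le, ← Real.rpow_mul hc.le]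
        congr 2
        simp only [e]
        field_simp
        ring

lemma le (hp : 0 < p) (hp2 : p ≤ 2) (hA : Function.Injective A.mulVec)
    (hw : IsLewisWeights p A w) (hv : IsLewisWeights p A v) : v ≤ w := by
  intro i
  obtain ⟨i₀, -, hmax⟩ :=
    Finset.exists_max_image Finset.univ (fun i => v i / w i) ⟨i, Finset.mem_univ i⟩
  set c := v i₀ / w i₀
  have hc : 0 < c := div_pos (hv.1 i₀) (hw.1 i₀)
  have hvw : ∀ i, v i ≤ c * w i := fun i =>
    (div_le_iff₀ (hw.1 i)).mp (hmax i (Finset.mem_univ i))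
  have hc1 : c ≤ 1 := by
    by_contra! hc1
    have hlt : c ^ (1 - p / 2) < c := by
      simpa using Real.rpow_lt_rpow_of_exponent_lt hc1 (show 1 - p / 2 < 1 by linarith)
    have hi₀ : c * w i₀ ≤ c ^ (1 - p / 2) * w i₀ := (div_mul_cancel₀ _ (hw.1 i₀).ne').trans_le
      (le_rpow_mul_of_le_mul hp hp2 hA hw hv hc hvw i₀)
    exact (mul_lt_mul_of_pos_right hlt (hw.1 i₀)).not_ge hi₀
  calc v i ≤ c * w i := hvw i
    _ ≤ w i := mul_le_of_le_one_left (hw.1 i).le hc1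

lemma unique (hp : 0 < p) (hp2 : p ≤ 2) (hA : Function.Injective A.mulVec)
    (hw : IsLewisWeights p A w) (hv : IsLewisWeights p A v) : w = v :=
  le_antisymm (hv.le hp hp2 hA hw) (hw.le hp hp2 hA hv)

end IsLewisWeights

lemma Real.rpow_one_sub_two_div_mul_sq_rpow_one_div {t : ℝ} (ht : 0 < t) (p : ℝ) :
    t ^ (1 - 2 / p) * (t ^ (1 / p)) ^ 2 = t := by
  rw [← Real.rpow_natCast, ← Real.rpow_mul ht.le, ← Real.rpow_add ht]
  convert Real.rpow_one t using 2
  push_cast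
  ring

lemma Real.sq_rpow_one_div_rpow_div_two {t p : ℝ} (ht : 0 ≤ t) (hp : p ≠ 0) :
    ((t ^ (1 / p)) ^ 2) ^ (p / 2) = t := by
  rw [← Real.rpow_natCast, ← Real.rpow_mul ht, ← Real.rpow_mul ht]
  field_simp
  simp

def splitWeights {n : ℕ} (w : Fin n → ℝ) (j : Fin n) (γ : ℝ) : Fin (n + 1) → ℝ :=
  Fin.snoc (Function.update w j ((1 - γ) * w j)) (γ * w j)

section splitWeights

variable {n : ℕ} (w : Fin n → ℝ) (j : Fin n) (γ : ℝ)

@[simp]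
lemma splitWeights_castSucc_of_ne {i : Fin n} (hi : i ≠ j) :
    splitWeights w j γ i.castSucc = w i := by
  simp [splitWeights, hi]

@[simp]
lemma splitWeights_castSucc_self : splitWeights w j γ j.castSucc = (1 - γ) * w j := by
  simp [splitWeights]

@[simp]
lemma splitWeights_last : splitWeights w j γ (Fin.last n) = γ * w j := by
  simp [splitWeights]

lemma splitWeights_pos (hγ0 : 0 < γ) (hγ1 : γ < 1) (hw : ∀ i, 0 < w i) (i : Fin (n + 1)) :
    0 < splitWeights w j γ i := by
  induction i using Fin.lastCases with
  | last => simpa using mul_pos hγ0 (hw j)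
  | cast i =>
    obtain rfl | hi := eq_or_ne i j
    · simpa using mul_pos (sub_pos.mpr hγ1) (hw i)
    · simpa [hi] using hw i

end splitWeights

structure IsRowSplit (p γ : ℝ) {n d : ℕ} (A : Matrix (Fin n) (Fin d) ℝ) (j : Fin n)
    (B : Matrix (Fin (n + 1)) (Fin d) ℝ) : Prop where
  castSucc_of_ne : ∀ i, i ≠ j → B i.castSucc = A i
  castSucc_self : B j.castSucc = (1 - γ) ^ (1 / p) • A j
  last : B (Fin.last n) = γ ^ (1 / p) • A j

namespace IsRowSplit

variable {p γ : ℝ} {n d : ℕ} {A : Matrix (Fin n) (Fin d) ℝ} {j : Fin n}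
  {B : Matrix (Fin (n + 1)) (Fin d) ℝ} {w : Fin n → ℝ}

lemma mulVec_injective (h : IsRowSplit p γ A j B) (hγ1 : γ < 1)
    (hA : Function.Injective A.mulVec) : Function.Injective B.mulVec := by
  refine mulVec_injective_of_forall_eq_smul (fun i => ?_) hA
  obtain rfl | hi := eq_or_ne i j
  · have hc : (1 - γ) ^ (1 / p) ≠ 0 := (Real.rpow_pos_of_pos (sub_pos.mpr hγ1) _).ne'
    exact ⟨i.castSucc, ((1 - γ) ^ (1 / p))⁻¹, by rw [h.castSucc_self, inv_smul_smul₀ hc]⟩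
  · exact ⟨i.castSucc, 1, by rw [h.castSucc_of_ne i hi, one_smul]⟩

-- Each part contributes `(t w)^{1-2/p} (t^{1/p})^2 = t w^{1-2/p}`, and the parts sum to `1`.
lemma transpose_mul_diagonal_mul_eq (h : IsRowSplit p γ A j B) (hγ0 : 0 < γ) (hγ1 : γ < 1)
    (hwj : 0 ≤ w j) :
    Bᵀ * diagonal (fun t => splitWeights w j γ t ^ (1 - 2 / p)) * B =
      Aᵀ * diagonal (fun t => w t ^ (1 - 2 / p)) * A := by
  ext k l
  simp only [transpose_mul_diagonal_mul_apply, Fin.sum_univ_castSucc]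
  rw [← Finset.add_sum_erase _ _ (Finset.mem_univ j),
    ← Finset.add_sum_erase _ _ (Finset.mem_univ j), add_right_comm]
  congr 1
  · simp only [splitWeights_castSucc_self, splitWeights_last, h.castSucc_self, h.last,
      Pi.smul_apply, smul_eq_mul, Real.mul_rpow (sub_pos.mpr hγ1).le hwj,
      Real.mul_rpow hγ0.le hwj]
    linear_combination (w j ^ (1 - 2 / p) * (A j k * A j l)) *
      (Real.rpow_one_sub_two_div_mul_sq_rpow_one_div (sub_pos.mpr hγ1) p +
        Real.rpow_one_sub_two_div_mul_sq_rpow_one_div hγ0 p)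
  · refine Finset.sum_congr rfl fun i hi => ?_
    have hij := Finset.ne_of_mem_erase hi
    rw [splitWeights_castSucc_of_ne w j γ hij, h.castSucc_of_ne i hij]

lemma isLewisWeights_splitWeights (h : IsRowSplit p γ A j B) (hp : 0 < p) (hγ0 : 0 < γ)
    (hγ1 : γ < 1) (hA : Function.Injective A.mulVec) (hw : IsLewisWeights p A w) :
    IsLewisWeights p B (splitWeights w j γ) := by
  refine ⟨splitWeights_pos w j γ hγ0 hγ1 hw.1, fun i => ?_⟩
  have hscaled : ∀ {s : ℝ}, 0 ≤ s → ((s ^ (1 / p) • A j) ⬝ᵥ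
      (Aᵀ * diagonal (fun t => w t ^ (1 - 2 / p)) * A)⁻¹ *ᵥ (s ^ (1 / p) • A j)) ^ (p / 2) =
      s * w j := by
    intro s hs
    rw [smul_dotProduct, mulVec_smul, dotProduct_smul, smul_eq_mul, smul_eq_mul, ← mul_assoc,
      ← sq, Real.mul_rpow (by positivity) (hw.dotProduct_inv_mulVec_nonneg hA _),
      Real.sq_rpow_one_div_rpow_div_two hs hp.ne', ← hw.2 j]
  rw [h.transpose_mul_diagonal_mul_eq hγ0 hγ1 (hw.1 j).le]
  induction i using Fin.lastCases with
  | last => rw [splitWeights_last, h.last, hscaled hγ0.le]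
  | cast i =>
    obtain rfl | hi := eq_or_ne i j
    · rw [splitWeights_castSucc_self, h.castSucc_self, hscaled (sub_pos.mpr hγ1).le]
    · rw [splitWeights_castSucc_of_ne w j γ hi, h.castSucc_of_ne i hi]
      exact hw.2 i

end IsRowSplit

/-- Splitting lemma: splitting row `aⱼ` of `A` into `(1-γ)^{1/p} aⱼ` and `γ^{1/p} aⱼ`
splits its Lewis weight into `(1-γ) wⱼ(A)` and `γ wⱼ(A)`, leaving all other weights
unchanged. -/
theorem stmt_6 {n d : ℕ} (p : ℝ) (hp1 : 1 ≤ p) (hp2 : p ≤ 2)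
    (A : Matrix (Fin n) (Fin d) ℝ) (hA : A.rank = d)
    (γ : ℝ) (hγ0 : 0 ≤ γ) (hγ1 : γ ≤ 1) (j : Fin n)
    (B : Matrix (Fin (n + 1)) (Fin d) ℝ)
    (hBrow : ∀ i : Fin n, i ≠ j → B i.castSucc = A i)
    (hBj : B j.castSucc = ((1 - γ) ^ ((1 : ℝ) / p)) • A j)
    (hBlast : B (Fin.last n) = (γ ^ ((1 : ℝ) / p)) • A j)
    (wA : Fin n → ℝ) (hwA : IsLewisWeights p A wA)
    (wB : Fin (n + 1) → ℝ) (hwB : IsLewisWeights p B wB) :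
    (∀ i : Fin n, i ≠ j → wB i.castSucc = wA i) ∧
    wB j.castSucc = (1 - γ) * wA j ∧
    wB (Fin.last n) = γ * wA j := by
  have hp : 0 < p := by linarith
  have hsplit : IsRowSplit p γ A j B := ⟨hBrow, hBj, hBlast⟩
  -- A zero row would have Lewis weight `0`, so neither part of the split can vanish.
  have hγpos : 0 < γ := hγ0.lt_of_ne' fun h => hwB.row_ne_zero hp (Fin.last n) <| by
    rw [hBlast, h, Real.zero_rpow (by positivity), zero_smul]
  have hγlt : γ < 1 := hγ1.lt_of_ne fun h => hwB.row_ne_zero hp j.castSucc <| by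
    rw [hBj, h, sub_self, Real.zero_rpow (by positivity), zero_smul]
  have hAinj : Function.Injective A.mulVec :=
    mulVec_injective_of_rank_eq_card (by rw [hA, Fintype.card_fin])
  obtain rfl : wB = splitWeights wA j γ :=
    hwB.unique hp hp2 (hsplit.mulVec_injective hγlt hAinj)
      (hsplit.isLewisWeights_splitWeights hp hγpos hγlt hAinj hwA)
  exact ⟨fun i hi => splitWeights_castSucc_of_ne wA j γ hi, splitWeights_castSucc_self wA j γ,
    splitWeights_last wA j γ⟩
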